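/- arXiv:2306.14561 — 2 statements merged into one kernel-verified Lean document; each statement's English description precedes it below -/
import Mathlib

section
/- The H∞ terminal cost satisfies the zero-sum dissipation property: with A_f = A + BK_f and V_f(x) = xᵀPx, for every x ∈ ℝⁿ one has sup over w ∈ ℝⁿ of [V_f(A_f x + w) − V_f(x) + xᵀQx + (K_f x)ᵀR(K_f x) − γ_f²wᵀw] = 0; that is, the expression in brackets is nonpositive for all w and the supremum is attained (at w* = (γ_f²I − P)^{-1}PA_f x). (Zero-sum game property (eq. (33)) used in the proof of Theorem 2.) -/
open Matrix

/-!
Put `S = γ_f² I − P`, so that `P̄ = P + P S⁻¹ P`. Completing the square in `w` gives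
`(u + w)ᵀP(u + w) − γ_f² wᵀw = uᵀP̄u − (w − w*)ᵀS(w − w*)` where `S w* = P u`. Substituting
the gain `K_f`, the Riccati equation becomes `A_fᵀP̄A_f + Q + K_fᵀRK_f = P`, so for `u = A_f x`
the constant `uᵀP̄u − xᵀPx + xᵀQx + (K_f x)ᵀR(K_f x)` vanishes. The bracket is therefore
`−(w − w*)ᵀS(w − w*)`, nonpositive since `S` is positive definite, and zero at `w*`.
-/

section
variable {α ι κ : Type*} [CommRing α] [Fintype ι] [Fintype κ]

theorem dotProduct_transpose_mul_mul_mulVec (M : Matrix κ ι α) (N : Matrix κ κ α) (x : ι → α) :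
    x ⬝ᵥ (Mᵀ * N * M) *ᵥ x = (M *ᵥ x) ⬝ᵥ N *ᵥ (M *ᵥ x) := by
  rw [← mulVec_mulVec, ← mulVec_mulVec, dotProduct_transpose_mulVec, dotProduct_comm]

theorem closedLoop_riccati_identity [DecidableEq κ] {A Pbar : Matrix ι ι α} {B : Matrix ι κ α}
    {R : Matrix κ κ α} {K : Matrix κ ι α} (hG : IsUnit (R + Bᵀ * Pbar * B).det)
    (hK : K = -((R + Bᵀ * Pbar * B)⁻¹ * Bᵀ * Pbar * A)) :
    (A + B * K)ᵀ * Pbar * (A + B * K) + Kᵀ * R * K =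
      Aᵀ * Pbar * A - Aᵀ * Pbar * B * (R + Bᵀ * Pbar * B)⁻¹ * Bᵀ * Pbar * A := by
  have hGK : (R + Bᵀ * Pbar * B) * K = -(Bᵀ * Pbar * A) := by
    rw [hK, Matrix.mul_neg, Matrix.mul_assoc _ Bᵀ, Matrix.mul_assoc _ (Bᵀ * Pbar),
      mul_nonsing_inv_cancel_left _ _ hG]
  calc (A + B * K)ᵀ * Pbar * (A + B * K) + Kᵀ * R * K
      = Aᵀ * Pbar * A + Aᵀ * Pbar * B * K + Kᵀ * (Bᵀ * Pbar * A + (R + Bᵀ * Pbar * B) * K) := by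
        simp only [transpose_add, transpose_mul, Matrix.add_mul, Matrix.mul_add,
          Matrix.mul_assoc]
        abel
    _ = Aᵀ * Pbar * A - Aᵀ * Pbar * B * (R + Bᵀ * Pbar * B)⁻¹ * Bᵀ * Pbar * A := by
        rw [hGK, add_neg_cancel, Matrix.mul_zero, add_zero, hK]
        simp only [Matrix.mul_neg, Matrix.mul_assoc, sub_eq_add_neg]

theorem dotProduct_mulVec_add_sub_eq_completeSquare [DecidableEq ι] {P S : Matrix ι ι α}
    (hP : Pᵀ = P) (hS : Sᵀ = S) (hSd : IsUnit S.det) (u w : ι → α) :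
    (u + w) ⬝ᵥ P *ᵥ (u + w) - w ⬝ᵥ (P + S) *ᵥ w =
      u ⬝ᵥ (P + P * S⁻¹ * P) *ᵥ u -
        (w - S⁻¹ *ᵥ P *ᵥ u) ⬝ᵥ S *ᵥ (w - S⁻¹ *ᵥ P *ᵥ u) := by
  set z := S⁻¹ *ᵥ P *ᵥ u
  have hSz : S *ᵥ z = P *ᵥ u := by rw [mulVec_mulVec, mul_nonsing_inv _ hSd, one_mulVec]
  have hPsymm : ∀ a b : ι → α, a ⬝ᵥ P *ᵥ b = b ⬝ᵥ P *ᵥ a := fun a b => by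
    rw [← dotProduct_transpose_mulVec, hP]
  have hzSw : z ⬝ᵥ S *ᵥ w = w ⬝ᵥ P *ᵥ u := by rw [← dotProduct_transpose_mulVec, hS, hSz]
  have huPz : u ⬝ᵥ (P * S⁻¹ * P) *ᵥ u = z ⬝ᵥ S *ᵥ z := by
    rw [hSz, Matrix.mul_assoc, ← mulVec_mulVec, ← mulVec_mulVec, hPsymm]
  simp only [Matrix.add_mulVec, Matrix.mulVec_add, Matrix.mulVec_sub, dotProduct_add,
    add_dotProduct, dotProduct_sub, sub_dotProduct, huPz, hzSw, hSz, hPsymm u w]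
  ring

theorem game_value_eq_neg_completeSquare [DecidableEq ι] {P S : Matrix ι ι α}
    (hP : Pᵀ = P) (hS : Sᵀ = S) (hSd : IsUnit S.det)
    {F Q : Matrix ι ι α} {R : Matrix κ κ α} {K : Matrix κ ι α}
    (hclosed : Fᵀ * (P + P * S⁻¹ * P) * F + Q + Kᵀ * R * K = P) (x w : ι → α) :
    (F *ᵥ x + w) ⬝ᵥ P *ᵥ (F *ᵥ x + w) - x ⬝ᵥ P *ᵥ x + x ⬝ᵥ Q *ᵥ x +
        (K *ᵥ x) ⬝ᵥ R *ᵥ (K *ᵥ x) - w ⬝ᵥ (P + S) *ᵥ w =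
      -((w - S⁻¹ *ᵥ P *ᵥ F *ᵥ x) ⬝ᵥ S *ᵥ (w - S⁻¹ *ᵥ P *ᵥ F *ᵥ x)) := by
  have hx := congrArg (fun M => x ⬝ᵥ M *ᵥ x) hclosed
  rw [add_mulVec, add_mulVec, dotProduct_add, dotProduct_add,
    dotProduct_transpose_mul_mul_mulVec, dotProduct_transpose_mul_mul_mulVec] at hx
  linear_combination hx + dotProduct_mulVec_add_sub_eq_completeSquare hP hS hSd (F *ᵥ x) w

end

theorem stmt14_general (n m : ℕ)
    (A : Matrix (Fin n) (Fin n) ℝ) (B : Matrix (Fin n) (Fin m) ℝ)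
    (Q : Matrix (Fin n) (Fin n) ℝ) (R : Matrix (Fin m) (Fin m) ℝ)
    (hR : R.PosDef)
    (γf : ℝ)
    (P : Matrix (Fin n) (Fin n) ℝ) (hP : P.PosDef)
    (hγP : (γf ^ 2 • (1 : Matrix (Fin n) (Fin n) ℝ) - P).PosDef)
    (Pbar : Matrix (Fin n) (Fin n) ℝ)
    (hPbar : Pbar = P + P * (γf ^ 2 • (1 : Matrix (Fin n) (Fin n) ℝ) - P)⁻¹ * P)
    (hRic : P = Q + Aᵀ * Pbar * A -
      Aᵀ * Pbar * B * (R + Bᵀ * Pbar * B)⁻¹ * Bᵀ * Pbar * A)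
    (Kf : Matrix (Fin m) (Fin n) ℝ)
    (hKf : Kf = -((R + Bᵀ * Pbar * B)⁻¹ * Bᵀ * Pbar * A))
    (x : Fin n → ℝ) :
    ∀ (Af : Matrix (Fin n) (Fin n) ℝ) (Vf : (Fin n → ℝ) → ℝ) (e : (Fin n → ℝ) → ℝ),
      Af = A + B * Kf →
      Vf = (fun y => y ⬝ᵥ (P *ᵥ y)) →
      (e = fun w => Vf (Af *ᵥ x + w) - Vf x + x ⬝ᵥ (Q *ᵥ x) +
        (Kf *ᵥ x) ⬝ᵥ (R *ᵥ (Kf *ᵥ x)) - γf ^ 2 * (w ⬝ᵥ w)) →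
      (∀ w : Fin n → ℝ, e w ≤ 0) ∧
      e (((γf ^ 2 • (1 : Matrix (Fin n) (Fin n) ℝ) - P)⁻¹ * P * Af) *ᵥ x) = 0 := by
  intro Af Vf e hAf hVf he
  set S := γf ^ 2 • (1 : Matrix (Fin n) (Fin n) ℝ) - P
  have hPt : Pᵀ = P := by simpa [conjTranspose_eq_transpose_of_trivial] using hP.isHermitian.eq
  have hSt : Sᵀ = S := by simpa [conjTranspose_eq_transpose_of_trivial] using hγP.isHermitian.eq
  have hSd : IsUnit S.det := hγP.det_pos.ne'.isUnit
  have hPbar_psd : Pbar.PosSemidef := hPbar ▸ hP.posSemidef.add (by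
    simpa [conjTranspose_eq_transpose_of_trivial, hPt] using
      hγP.inv.posSemidef.conjTranspose_mul_mul_same P)
  have hG : IsUnit (R + Bᵀ * Pbar * B).det := (hR.add_posSemidef (by
    simpa [conjTranspose_eq_transpose_of_trivial] using
      hPbar_psd.conjTranspose_mul_mul_same B)).det_pos.ne'.isUnit
  have hclosed : Afᵀ * (P + P * S⁻¹ * P) * Af + Q + Kfᵀ * R * Kf = P := by
    rw [← hPbar, add_right_comm, hAf, closedLoop_riccati_identity hG hKf, hRic]
    abel
  have hval : ∀ w, e w = -((w - S⁻¹ *ᵥ P *ᵥ Af *ᵥ x) ⬝ᵥ S *ᵥ (w - S⁻¹ *ᵥ P *ᵥ Af *ᵥ x)) := by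
    intro w
    rw [← game_value_eq_neg_completeSquare hPt hSt hSd hclosed x w, add_sub_cancel, he, hVf,
      smul_mulVec, one_mulVec, dotProduct_smul, smul_eq_mul]
  refine ⟨fun w => ?_, ?_⟩
  · rw [hval, neg_nonpos]
    simpa using hγP.posSemidef.dotProduct_mulVec_nonneg (w - S⁻¹ *ᵥ P *ᵥ Af *ᵥ x)
  · rw [hval, ← mulVec_mulVec, ← mulVec_mulVec, sub_self, zero_dotProduct, neg_zero]

/-- Zero-sum game property (eq. (33)) of the `H∞` terminal cost: with `A_f = A + BK_f`
and `V_f(x) = xᵀPx`, for every `x` the expression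
`V_f(A_f x + w) − V_f(x) + xᵀQx + (K_f x)ᵀR(K_f x) − γ_f²wᵀw` is nonpositive for all `w`,
and vanishes at `w* = (γ_f²I − P)⁻¹PA_f x`. -/
theorem stmt14 (n m : ℕ) (hn : 0 < n) (hm : 0 < m)
    (A : Matrix (Fin n) (Fin n) ℝ) (B : Matrix (Fin n) (Fin m) ℝ)
    (Q : Matrix (Fin n) (Fin n) ℝ) (R : Matrix (Fin m) (Fin m) ℝ)
    (hQ : Q.PosSemidef) (hR : R.PosDef)
    (γf : ℝ) (hγf : 0 < γf)
    (P : Matrix (Fin n) (Fin n) ℝ) (hP : P.PosDef)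
    (hγP : (γf ^ 2 • (1 : Matrix (Fin n) (Fin n) ℝ) - P).PosDef)
    (Pbar : Matrix (Fin n) (Fin n) ℝ)
    (hPbar : Pbar = P + P * (γf ^ 2 • (1 : Matrix (Fin n) (Fin n) ℝ) - P)⁻¹ * P)
    (hRic : P = Q + Aᵀ * Pbar * A -
      Aᵀ * Pbar * B * (R + Bᵀ * Pbar * B)⁻¹ * Bᵀ * Pbar * A)
    (Kf : Matrix (Fin m) (Fin n) ℝ)
    (hKf : Kf = -((R + Bᵀ * Pbar * B)⁻¹ * Bᵀ * Pbar * A))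
    (x : Fin n → ℝ) :
    ∀ (Af : Matrix (Fin n) (Fin n) ℝ) (Vf : (Fin n → ℝ) → ℝ) (e : (Fin n → ℝ) → ℝ),
      Af = A + B * Kf →
      Vf = (fun y => y ⬝ᵥ (P *ᵥ y)) →
      (e = fun w => Vf (Af *ᵥ x + w) - Vf x + x ⬝ᵥ (Q *ᵥ x) +
        (Kf *ᵥ x) ⬝ᵥ (R *ᵥ (Kf *ᵥ x)) - γf ^ 2 * (w ⬝ᵥ w)) →
      (∀ w : Fin n → ℝ, e w ≤ 0) ∧
      e (((γf ^ 2 • (1 : Matrix (Fin n) (Fin n) ℝ) - P)⁻¹ * P * Af) *ᵥ x) = 0 :=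
  stmt14_general n m A B Q R hR γf P hP hγP Pbar hPbar hRic Kf hKf x
end

section
/- Causal achievable closed-loop state responses are invertible: if the pair (Φx, Φu) is causal (block lower triangular) and satisfies the achievability constraint (I − 𝐙𝐀)Φx − 𝐙𝐁Φu = I, then Φx is an invertible matrix (its diagonal n×n blocks all equal the identity). -/
open Matrix

noncomputable section

/-- Index type for stacked state / disturbance trajectories over horizon `T`:
block index in `Fin (T+1)`, coordinate in `Fin n`. -/
abbrev SIdx (n T : ℕ) := Fin (T + 1) × Fin n

/-- Index type for stacked input trajectories over horizon `T`. -/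
abbrev UIdx (m T : ℕ) := Fin T × Fin m

/-- The block-downshift operator `𝐙`. -/
def Zshift (n T : ℕ) : Matrix (SIdx n T) (SIdx n T) ℝ :=
  Matrix.of fun p q => if (p.1 : ℕ) = (q.1 : ℕ) + 1 ∧ p.2 = q.2 then (1 : ℝ) else 0

/-- `𝐀 = I_{T+1} ⊗ A`. -/
def bigA (n T : ℕ) (A : Matrix (Fin n) (Fin n) ℝ) : Matrix (SIdx n T) (SIdx n T) ℝ :=
  Matrix.of fun p q => if p.1 = q.1 then A p.2 q.2 else 0

/-- `𝐁 = col(I_T ⊗ B, 0)`. -/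
def bigB (n m T : ℕ) (B : Matrix (Fin n) (Fin m) ℝ) : Matrix (SIdx n T) (UIdx m T) ℝ :=
  Matrix.of fun p q => if (p.1 : ℕ) = (q.1 : ℕ) then B p.2 q.2 else 0

/-- `𝐐 = blkdiag(I_T ⊗ Q, 0)`. -/
def bigQ (n T : ℕ) (Q : Matrix (Fin n) (Fin n) ℝ) : Matrix (SIdx n T) (SIdx n T) ℝ :=
  Matrix.of fun p q => if p.1 = q.1 ∧ (p.1 : ℕ) < T then Q p.2 q.2 else 0

/-- `𝐑 = I_T ⊗ R`. -/
def bigR (m T : ℕ) (R : Matrix (Fin m) (Fin m) ℝ) : Matrix (UIdx m T) (UIdx m T) ℝ :=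
  Matrix.of fun p q => if p.1 = q.1 then R p.2 q.2 else 0

/-- `𝐅 = (I − 𝐙𝐀)⁻¹𝐙𝐁`. -/
def bigF (n m T : ℕ) (A : Matrix (Fin n) (Fin n) ℝ) (B : Matrix (Fin n) (Fin m) ℝ) :
    Matrix (SIdx n T) (UIdx m T) ℝ :=
  (1 - Zshift n T * bigA n T A)⁻¹ * (Zshift n T * bigB n m T B)

/-- `𝐆 = (I − 𝐙𝐀)⁻¹`. -/
def bigG (n T : ℕ) (A : Matrix (Fin n) (Fin n) ℝ) : Matrix (SIdx n T) (SIdx n T) ℝ :=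
  (1 - Zshift n T * bigA n T A)⁻¹

/-- The control cost `J_T(u, δ) = xᵀ𝐐x + uᵀ𝐑u` with `x = 𝐅u + 𝐆δ`. -/
def costJ (n m T : ℕ) (A : Matrix (Fin n) (Fin n) ℝ) (B : Matrix (Fin n) (Fin m) ℝ)
    (Q : Matrix (Fin n) (Fin n) ℝ) (R : Matrix (Fin m) (Fin m) ℝ)
    (u : UIdx m T → ℝ) (δ : SIdx n T → ℝ) : ℝ :=
  let x := bigF n m T A B *ᵥ u + bigG n T A *ᵥ δ
  x ⬝ᵥ (bigQ n T Q *ᵥ x) + u ⬝ᵥ (bigR m T R *ᵥ u)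

/-- `𝐏 = 𝐑 + 𝐅ᵀ𝐐𝐅`. -/
def bigP (n m T : ℕ) (A : Matrix (Fin n) (Fin n) ℝ) (B : Matrix (Fin n) (Fin m) ℝ)
    (Q : Matrix (Fin n) (Fin n) ℝ) (R : Matrix (Fin m) (Fin m) ℝ) :
    Matrix (UIdx m T) (UIdx m T) ℝ :=
  bigR m T R + (bigF n m T A B)ᵀ * bigQ n T Q * bigF n m T A B

/-- The clairvoyant cost matrix `𝐂_T = 𝐆ᵀ𝐐(I + 𝐅𝐑⁻¹𝐅ᵀ𝐐)⁻¹𝐆`. -/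
def Cmat (n m T : ℕ) (A : Matrix (Fin n) (Fin n) ℝ) (B : Matrix (Fin n) (Fin m) ℝ)
    (Q : Matrix (Fin n) (Fin n) ℝ) (R : Matrix (Fin m) (Fin m) ℝ) :
    Matrix (SIdx n T) (SIdx n T) ℝ :=
  (bigG n T A)ᵀ * bigQ n T Q *
    (1 + bigF n m T A B * (bigR m T R)⁻¹ * (bigF n m T A B)ᵀ * bigQ n T Q)⁻¹ * bigG n T A

/-- Assemble `δ = col(x₀, w₀, …, w_{T−1})`. -/
def assemble (n T : ℕ) (x0 : Fin n → ℝ) (w : Fin T × Fin n → ℝ) : SIdx n T → ℝ :=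
  fun p => if h : (p.1 : ℕ) = 0 then x0 p.2
    else w (⟨(p.1 : ℕ) - 1, by have := p.1.isLt; omega⟩, p.2)

/-- A pair of closed-loop responses is causal if both matrices are block lower
triangular (all blocks strictly above the block diagonal vanish). -/
def causalPair (n m T : ℕ) (Φx : Matrix (SIdx n T) (SIdx n T) ℝ)
    (Φu : Matrix (UIdx m T) (SIdx n T) ℝ) : Prop :=
  (∀ p q : SIdx n T, (p.1 : ℕ) < (q.1 : ℕ) → Φx p q = 0) ∧
  (∀ (p : UIdx m T) (q : SIdx n T), (p.1 : ℕ) < (q.1 : ℕ) → Φu p q = 0)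


lemma Zmul_zero_row {n T : ℕ}
    (X : Matrix (SIdx n T) (SIdx n T) ℝ) (i : Fin (T+1)) (p : Fin n) (q : SIdx n T)
    (hX : ∀ k : SIdx n T, (k.1 : ℕ) < (i : ℕ) → X k q = 0) :
    (Zshift n T * X) (i, p) q = 0 := by
  rw [Matrix.mul_apply]
  apply Finset.sum_eq_zero
  intro x _
  by_cases h : (i : ℕ) = (x.1 : ℕ) + 1 ∧ p = x.2
  · have hx : (x.1 : ℕ) < (i : ℕ) := by omega
    rw [hX x hx, mul_zero]
  · simp [Zshift, h]

/-- Causal achievable closed-loop state responses are invertible: their diagonal `n×n`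
blocks all equal the identity, and `Φx` is an invertible matrix. -/
theorem stmt15 (n m T : ℕ) (hn : 0 < n) (hm : 0 < m) (hT : 1 ≤ T)
    (A : Matrix (Fin n) (Fin n) ℝ) (B : Matrix (Fin n) (Fin m) ℝ)
    (Φx : Matrix (SIdx n T) (SIdx n T) ℝ) (Φu : Matrix (UIdx m T) (SIdx n T) ℝ)
    (hcausal : causalPair n m T Φx Φu)
    (hach : (1 - Zshift n T * bigA n T A) * Φx - Zshift n T * bigB n m T B * Φu = 1) :
    IsUnit Φx ∧
    ∀ (i : Fin (T + 1)) (p q : Fin n), Φx (i, p) (i, q) = if p = q then (1 : ℝ) else 0 := by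
  obtain ⟨hx, hu⟩ := hcausal
  have hdiag : ∀ (i : Fin (T + 1)) (p q : Fin n),
      Φx (i, p) (i, q) = if p = q then (1 : ℝ) else 0 := by
    intro i p q
    have h1 := congrFun (congrFun hach (i, p)) (i, q)
    rw [Matrix.sub_mul, one_mul, mul_assoc, Matrix.mul_assoc] at h1
    rw [show ((Φx - Zshift n T * (bigA n T A * Φx)) - Zshift n T * (bigB n m T B * Φu))
          (i, p) (i, q)
        = Φx (i, p) (i, q) - (Zshift n T * (bigA n T A * Φx)) (i, p) (i, q)
          - (Zshift n T * (bigB n m T B * Φu)) (i, p) (i, q) from rfl] at h1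
    have hA : (Zshift n T * (bigA n T A * Φx)) (i, p) (i, q) = 0 := by
      apply Zmul_zero_row
      intro k hk
      rw [Matrix.mul_apply]
      apply Finset.sum_eq_zero
      intro x _
      by_cases h : k.1 = x.1
      · have : (x.1 : ℕ) < (i : ℕ) := by rw [← h]; exact hk
        rw [show Φx x (i, q) = 0 from hx x (i, q) this, mul_zero]
      · simp [bigA, h]
    have hB : (Zshift n T * (bigB n m T B * Φu)) (i, p) (i, q) = 0 := by
      apply Zmul_zero_row
      intro k hk
      rw [Matrix.mul_apply]
      apply Finset.sum_eq_zero
      intro x _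
      by_cases h : (k.1 : ℕ) = (x.1 : ℕ)
      · have : (x.1 : ℕ) < (i : ℕ) := by omega
        rw [show Φu x (i, q) = 0 from hu x (i, q) this, mul_zero]
      · simp [bigB, h]
    rw [hA, hB, sub_zero, sub_zero, Matrix.one_apply] at h1
    rw [h1]
    simp [Prod.ext_iff]
  refine ⟨?_, hdiag⟩
  have hbt : Φxᵀ.BlockTriangular (fun p : SIdx n T => (p.1 : ℕ)) := by
    intro p q h
    exact hx q p h
  have hdet : Φxᵀ.det = 1 := by
    rw [hbt.det]
    apply Finset.prod_eq_one
    intro a _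
    have : Φxᵀ.toSquareBlock (fun p : SIdx n T => (p.1 : ℕ)) a = 1 := by
      ext ⟨⟨u1, u2⟩, hu'⟩ ⟨⟨v1, v2⟩, hv'⟩
      have h1 : u1 = v1 := by
        apply Fin.ext
        simp only at hu' hv'
        omega
      subst h1
      have h2 : Φxᵀ.toSquareBlock (fun p : SIdx n T => (p.1 : ℕ)) a
          ⟨(u1, u2), hu'⟩ ⟨(u1, v2), hv'⟩ = Φx (u1, v2) (u1, u2) := rfl
      rw [h2, hdiag u1 v2 u2, Matrix.one_apply]
      simp [Subtype.ext_iff, Prod.ext_iff, eq_comm]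
    rw [this, Matrix.det_one]
  have : Φx.det = 1 := by rw [← Matrix.det_transpose]; exact hdet
  rw [Matrix.isUnit_iff_isUnit_det, this]
  exact isUnit_one

end
end
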